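/- arXiv:1712.07724 — 6 statements merged into one kernel-verified Lean document; each statement's English description precedes it below -/
import Mathlib

section
/- There is no club C ⊆ ω₁ measuring the sequence (S ∩ δ : δ a limit ordinal < ω₁) when S is a stationary and co-stationary subset of ω₁. That is, if S ⊆ ω₁ is stationary and ω₁ \ S is stationary, then for every club C ⊆ ω₁ there exists δ ∈ C such that for all α < δ, neither (C ∩ δ) \ α ⊆ S nor ((C ∩ δ) \ α) ∩ S = ∅. -/
/-!
Since `C ∩ S` and `C \ S` are both unbounded in ω₁, one can pick a strictly increasing sequence
in `C` whose terms alternate between `S` and its complement. Its supremum `δ` is a countable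
limit of points of `C`, so `δ < ω₁` and `δ ∈ C`; every final segment of `C ∩ δ` contains points
of the sequence on both sides of `S`.
-/

noncomputable def omega1 : Ordinal.{0} := (Cardinal.aleph 1).ord

def IsClubOmega1 (C : Set Ordinal) : Prop :=
  C ⊆ Set.Iio omega1 ∧
    (∀ δ, δ < omega1 → δ ≠ 0 → sSup (C ∩ Set.Iio δ) = δ → δ ∈ C) ∧
    ∀ α, α < omega1 → ∃ β ∈ C, α < β

def IsStationaryOmega1 (S : Set Ordinal) : Prop :=
  S ⊆ Set.Iio omega1 ∧ ∀ C, IsClubOmega1 C → (S ∩ C).Nonempty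

open Ordinal

lemma omega1_eq_omega_one : omega1 = ω₁ := Cardinal.ord_aleph 1

lemma iSup_lt_omega1 {f : ℕ → Ordinal} (hf : ∀ n, f n < omega1) : ⨆ n, f n < omega1 := by
  rw [omega1_eq_omega_one] at hf ⊢
  exact iSup_lt_omega_one hf

lemma StrictMono.lt_iSup {g : ℕ → Ordinal} (hg : StrictMono g) (n : ℕ) : g n < ⨆ m, g m :=
  (hg n.lt_succ_self).trans_le (Ordinal.le_iSup g (n + 1))

lemma exists_strictMono_forall_mem {o : Ordinal} (ho : 0 < o) (P : ℕ → Set Ordinal)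
    (hP : ∀ n, ∀ α < o, ∃ β ∈ P n, α < β ∧ β < o) :
    ∃ g : ℕ → Ordinal, StrictMono g ∧ ∀ n, g n ∈ P n ∧ g n < o := by
  choose! next hnextP hnext_gt hnext_lt using hP
  let g : ℕ → Ordinal := fun n => Nat.rec (next 0 0) (fun k gk => next (k + 1) gk) n
  have hg : ∀ n, g n ∈ P n ∧ g n < o := by
    intro n
    induction n with
    | zero => exact ⟨hnextP 0 0 ho, hnext_lt 0 0 ho⟩
    | succ k ih => exact ⟨hnextP (k + 1) (g k) ih.2, hnext_lt (k + 1) (g k) ih.2⟩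
  exact ⟨g, strictMono_nat_of_lt_succ fun k => hnext_gt (k + 1) (g k) (hg k).2, hg⟩

namespace IsClubOmega1

variable {C : Set Ordinal}

lemma inter_Ioi (hC : IsClubOmega1 C) {α : Ordinal} (hα : α < omega1) :
    IsClubOmega1 (C ∩ Set.Ioi α) := by
  obtain ⟨hsub, hclosed, hunb⟩ := hC
  refine ⟨fun x hx => hsub hx.1, ?_, ?_⟩
  · intro δ hδ hδ0 hsup
    obtain ⟨β, ⟨hβC, hαβ⟩, hβδ⟩ : (C ∩ Set.Ioi α ∩ Set.Iio δ).Nonempty := by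
      by_contra h
      rw [Set.not_nonempty_iff_eq_empty.mp h, csSup_empty] at hsup
      exact hδ0 hsup.symm
    refine ⟨hclosed δ hδ hδ0 (le_antisymm ?_ ?_), Set.mem_Ioi.mpr (hαβ.trans hβδ)⟩
    · exact csSup_le ⟨β, hβC, hβδ⟩ fun x hx => hx.2.le
    · calc δ = sSup (C ∩ Set.Ioi α ∩ Set.Iio δ) := hsup.symm
        _ ≤ sSup (C ∩ Set.Iio δ) :=
          csSup_le_csSup ⟨δ, fun x hx => hx.2.le⟩ ⟨β, ⟨hβC, hαβ⟩, hβδ⟩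
            fun x hx => ⟨hx.1.1, hx.2⟩
  · intro γ hγ
    obtain ⟨β, hβC, hβ⟩ := hunb (max α γ) (max_lt hα hγ)
    exact ⟨β, ⟨hβC, (le_max_left _ _).trans_lt hβ⟩, (le_max_right _ _).trans_lt hβ⟩

lemma iSup_mem (hC : IsClubOmega1 C) {g : ℕ → Ordinal} (hg : StrictMono g)
    (hgC : ∀ n, g n ∈ C) : ⨆ n, g n ∈ C := by
  have hδ : ⨆ n, g n < omega1 := iSup_lt_omega1 fun n => hC.1 (hgC n)
  refine hC.2.1 _ hδ (hg.lt_iSup 0).ne_bot (le_antisymm ?_ ?_)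
  · exact csSup_le ⟨g 0, hgC 0, hg.lt_iSup 0⟩ fun x hx => hx.2.le
  · exact Ordinal.iSup_le fun n =>
      le_csSup ⟨_, fun x hx => hx.2.le⟩ ⟨hgC n, hg.lt_iSup n⟩

end IsClubOmega1

lemma IsStationaryOmega1.exists_mem_inter_gt {S C : Set Ordinal} (hS : IsStationaryOmega1 S)
    (hC : IsClubOmega1 C) {α : Ordinal} (hα : α < omega1) : ∃ β ∈ S ∩ C, α < β := by
  obtain ⟨β, hβS, hβC, hαβ⟩ := hS.2 _ (hC.inter_Ioi hα)
  exact ⟨β, ⟨hβS, hβC⟩, hαβ⟩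

theorem stmt0 (S : Set Ordinal) (h1 : IsStationaryOmega1 S)
    (h2 : IsStationaryOmega1 (Set.Iio omega1 \ S)) (C : Set Ordinal) (hC : IsClubOmega1 C) :
    ∃ δ ∈ C, ∀ α < δ,
      ¬ ((C ∩ Set.Iio δ) \ Set.Iio α ⊆ S) ∧ (((C ∩ Set.Iio δ) \ Set.Iio α) ∩ S).Nonempty := by
  let P : ℕ → Set Ordinal := fun n => if Even n then S ∩ C else (Set.Iio omega1 \ S) ∩ C
  have hPC : ∀ n, P n ⊆ C := fun n => by
    simp only [P]
    split_ifs <;> exact Set.inter_subset_right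
  obtain ⟨g, hg, hgP⟩ := exists_strictMono_forall_mem (omega_pos 1) P fun n α hα => by
    rw [← omega1_eq_omega_one] at hα ⊢
    obtain ⟨β, hβ, hαβ⟩ : ∃ β ∈ P n, α < β := by
      by_cases hn : Even n
      · simpa [P, hn] using h1.exists_mem_inter_gt hC hα
      · simpa [P, hn] using h2.exists_mem_inter_gt hC hα
    exact ⟨β, hβ, hαβ, hC.1 (hPC n hβ)⟩
  have hgC : ∀ n, g n ∈ C := fun n => hPC n (hgP n).1
  refine ⟨⨆ n, g n, hC.iSup_mem hg hgC, fun α hα => ?_⟩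
  obtain ⟨n, hαn⟩ := Ordinal.lt_iSup_iff.mp hα
  have htail : ∀ m, n ≤ m → g m ∈ (C ∩ Set.Iio (⨆ n, g n)) \ Set.Iio α := fun m hm =>
    ⟨⟨hgC m, hg.lt_iSup m⟩, not_lt.mpr (hαn.trans_le (hg.monotone hm)).le⟩
  have hodd : g (2 * n + 1) ∉ S := by
    have h := (hgP (2 * n + 1)).1
    simp only [P, if_neg (Nat.not_even_two_mul_add_one n)] at h
    exact h.1.2
  have heven : g (2 * n) ∈ S := by
    have h := (hgP (2 * n)).1
    simp only [P, if_pos (even_two_mul n)] at h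
    exact h.1
  exact ⟨fun hsub => hodd (hsub (htail _ (by omega))), ⟨_, htail _ (by omega), heven⟩⟩
end

section
/- Measuring implies the negation of weak Club Guessing: if for every sequence (C_δ : δ ∈ Lim(ω₁)) of closed subsets C_δ ⊆ δ there is a club measuring it, then for every ladder system (C_δ : δ ∈ Lim(ω₁)) (each C_δ cofinal in δ of order type ω) there is a club D ⊆ ω₁ such that D ∩ C_δ is finite for every limit δ < ω₁. -/
def IsClubω₁ (C : Set Ordinal) : Prop :=
  C ⊆ Set.Iio omega1 ∧
    (∀ δ, δ < omega1 → δ ≠ 0 → sSup (C ∩ Set.Iio δ) = δ → δ ∈ C) ∧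
    ∀ α, α < omega1 → ∃ β ∈ C, α < β

/-- `D` is closed (in the order topology) as a subset of `β`. -/
def IsClosedIn (D : Set Ordinal) (β : Ordinal) : Prop :=
  ∀ δ, δ < β → δ ≠ 0 → sSup (D ∩ Set.Iio δ) = δ → δ ∈ D

/-- The principle `Measuring`: every sequence of closed subsets `A δ ⊆ δ`
(for limit `δ < ω₁`) is measured by some club. -/
def Measuring : Prop :=
  ∀ A : Ordinal → Set Ordinal,
    (∀ δ, δ < omega1 → Order.IsSuccLimit δ → A δ ⊆ Set.Iio δ ∧ IsClosedIn (A δ) δ) →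
    ∃ C, IsClubω₁ C ∧ ∀ δ ∈ C, Order.IsSuccLimit δ →
      ∃ α < δ, ((C ∩ Set.Iio δ) \ Set.Iio α ⊆ A δ ∨
        ((C ∩ Set.Iio δ) \ Set.Iio α) ∩ A δ = ∅)

/-- A ladder system: each `L δ` (for limit `δ < ω₁`) is a cofinal subset of `δ`
of order type `ω`. -/
def IsLadderSystem (L : Ordinal → Set Ordinal) : Prop :=
  ∀ δ, δ < omega1 → Order.IsSuccLimit δ →
    ∃ f : ℕ → Ordinal, StrictMono f ∧ Set.range f = L δ ∧ (∀ n, f n < δ) ∧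
      ∀ α < δ, ∃ n, α < f n

/-!
A ladder has order type `ω`, so it has no limit points below its top and is closed; Measuring
therefore yields a club `C` measuring the ladder system itself. Let `D` be the club of limit
points of `C`. If `D ∩ L δ` were infinite it would be cofinal in `δ`, so `δ ∈ C` and some tail
of `C ∩ δ` is either disjoint from `L δ`, which fails at any point of `D ∩ L δ` in that tail, or
contained in `L δ`, which fails because such a point `β` is a limit of `C` while `L δ ∩ β` is
finite.
-/

open Set

lemma sSup_inter_Iio_eq_iff {S : Set Ordinal} {δ : Ordinal} :
    sSup (S ∩ Iio δ) = δ ↔ ∀ α < δ, ∃ β ∈ S, α < β ∧ β < δ := by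
  refine ⟨fun h α hα => ?_, fun h => le_antisymm (csSup_le' fun _ hx => hx.2.le) ?_⟩
  · obtain ⟨β, ⟨hβS, hβδ⟩, hαβ⟩ := exists_lt_of_lt_csSup' (h.symm ▸ hα)
    exact ⟨β, hβS, hαβ, hβδ⟩
  · refine le_of_forall_lt fun α hα => ?_
    obtain ⟨β, hβS, hαβ, hβδ⟩ := h α hα
    exact lt_csSup_of_lt ⟨δ, fun _ hx => hx.2.le⟩ ⟨hβS, hβδ⟩ hαβ

lemma sSup_inter_Iio_ne_of_finite {S : Set Ordinal} {δ : Ordinal} (hS : (S ∩ Iio δ).Finite)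
    (hδ : δ ≠ 0) : sSup (S ∩ Iio δ) ≠ δ := by
  intro h
  rcases (S ∩ Iio δ).eq_empty_or_nonempty with he | hne
  · rw [he, csSup_empty] at h
    exact hδ h.symm
  · exact lt_irrefl δ (h ▸ hne.csSup_mem hS).2

lemma infinite_inter_Ico_of_sSup_inter_Iio_eq {S : Set Ordinal} {α β : Ordinal}
    (h : sSup (S ∩ Iio β) = β) (hαβ : α < β) : (S ∩ Ico α β).Infinite := by
  intro hfin
  refine sSup_inter_Iio_ne_of_finite (S := S \ Iio α) (hfin.subset ?_) hαβ.ne_bot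
    (sSup_inter_Iio_eq_iff.2 fun γ hγ => ?_)
  · rintro x ⟨⟨hxS, hαx⟩, hxβ⟩
    exact ⟨hxS, not_lt.1 hαx, hxβ⟩
  · obtain ⟨x, hxS, hx, hxβ⟩ := sSup_inter_Iio_eq_iff.1 h (max γ α) (max_lt hγ hαβ)
    exact ⟨x, ⟨hxS, not_lt.2 ((le_max_right _ _).trans hx.le)⟩,
      (le_max_left _ _).trans_lt hx, hxβ⟩

namespace IsLadderSystem

variable {L : Ordinal → Set Ordinal} (hL : IsLadderSystem L) {δ : Ordinal} (hδ : δ < omega1)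
  (hlim : Order.IsSuccLimit δ)
include hL hδ hlim

lemma subset_Iio : L δ ⊆ Iio δ := by
  obtain ⟨f, -, hfL, hfδ, -⟩ := hL δ hδ hlim
  rintro _ hx
  obtain ⟨n, rfl⟩ := hfL ▸ hx
  exact hfδ n

lemma finite_inter_Iic {α : Ordinal} (hα : α < δ) : (L δ ∩ Iic α).Finite := by
  obtain ⟨f, hf, hfL, -, hcof⟩ := hL δ hδ hlim
  obtain ⟨n, hn⟩ := hcof α hα
  refine ((finite_Iio n).image f).subset ?_
  rintro _ ⟨hx, hxα⟩
  obtain ⟨k, rfl⟩ := hfL ▸ hx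
  exact ⟨k, hf.lt_iff_lt.1 (hxα.trans_lt hn), rfl⟩

lemma isClosedIn : IsClosedIn (L δ) δ := fun _ hγ hγ0 hsup =>
  (sSup_inter_Iio_ne_of_finite ((hL.finite_inter_Iic hδ hlim hγ).subset
    (inter_subset_inter_right _ Iio_subset_Iic_self)) hγ0 hsup).elim

lemma exists_gt_of_infinite {S : Set Ordinal} (hS : (S ∩ L δ).Infinite) {α : Ordinal}
    (hα : α < δ) : ∃ β ∈ S ∩ L δ, α < β := by
  by_contra! h
  exact hS ((hL.finite_inter_Iic hδ hlim hα).subset fun x hx => ⟨hx.2, h x hx⟩)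

end IsLadderSystem

def accPointsω₁ (C : Set Ordinal) : Set Ordinal :=
  {δ | δ < omega1 ∧ δ ≠ 0 ∧ sSup (C ∩ Iio δ) = δ}

namespace IsClubω₁

variable {C : Set Ordinal} (hC : IsClubω₁ C)
include hC

lemma accPointsω₁_subset : accPointsω₁ C ⊆ C := fun δ ⟨hδ, hδ0, hsup⟩ => hC.2.1 δ hδ hδ0 hsup

lemma exists_strictMono_seq {α : Ordinal} (hα : α < omega1) :
    ∃ g : ℕ → Ordinal, StrictMono g ∧ α < g 0 ∧ ∀ n, g n ∈ C := by
  choose next hnextC hlt using fun x : C => hC.2.2 x (hC.1 x.2)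
  obtain ⟨c, hcC, hαc⟩ := hC.2.2 α hα
  let g : ℕ → C := fun n => (fun x => ⟨next x, hnextC x⟩)^[n] ⟨c, hcC⟩
  refine ⟨fun n => g n, strictMono_nat_of_lt_succ fun n => ?_, hαc, fun n => (g n).2⟩
  simp only [g, Function.iterate_succ_apply']
  exact hlt _

lemma exists_mem_accPointsω₁_gt {α : Ordinal} (hα : α < omega1) :
    ∃ δ ∈ accPointsω₁ C, α < δ := by
  obtain ⟨g, hg, hαg, hgC⟩ := hC.exists_strictMono_seq hα
  have hgδ (n : ℕ) : g n < ⨆ n, g n := (hg n.lt_succ_self).trans_le (Ordinal.le_iSup g _)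
  have hαδ : α < ⨆ n, g n := hαg.trans (hgδ 0)
  have hδ : ⨆ n, g n < omega1 := Ordinal.iSup_lt_of_lt_cof
    (by rw [omega1, Cardinal.isRegular_aleph_one.cof_ord, Cardinal.mk_nat]
        exact Cardinal.aleph0_lt_aleph_one)
    fun n => hC.1 (hgC n)
  refine ⟨⨆ n, g n, ⟨hδ, hαδ.ne_bot, sSup_inter_Iio_eq_iff.2 fun γ hγ => ?_⟩, hαδ⟩
  obtain ⟨n, hn⟩ := Ordinal.lt_iSup_iff.1 hγ
  exact ⟨g n, hgC n, hn, hgδ n⟩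

lemma accPointsω₁_isClubω₁ : IsClubω₁ (accPointsω₁ C) := by
  refine ⟨fun _ h => h.1, fun δ hδ hδ0 hsup => ⟨hδ, hδ0, ?_⟩, fun α hα =>
    hC.exists_mem_accPointsω₁_gt hα⟩
  refine sSup_inter_Iio_eq_iff.2 fun α hα => ?_
  obtain ⟨β, hβ, hαβ, hβδ⟩ := sSup_inter_Iio_eq_iff.1 hsup α hα
  exact ⟨β, hC.accPointsω₁_subset hβ, hαβ, hβδ⟩

end IsClubω₁

theorem stmt1 (hM : Measuring) (L : Ordinal → Set Ordinal) (hL : IsLadderSystem L) :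
    ∃ D, IsClubω₁ D ∧ ∀ δ, δ < omega1 → Order.IsSuccLimit δ → (D ∩ L δ).Finite := by
  obtain ⟨C, hC, hmeas⟩ := hM L fun δ hδ hlim =>
    ⟨hL.subset_Iio hδ hlim, hL.isClosedIn hδ hlim⟩
  refine ⟨accPointsω₁ C, hC.accPointsω₁_isClubω₁, fun δ hδ hlim => ?_⟩
  by_contra hinf
  have hcof := fun α (hα : α < δ) => hL.exists_gt_of_infinite hδ hlim hinf hα
  have hδC : δ ∈ C := hC.2.1 δ hδ hlim.ne_bot <| sSup_inter_Iio_eq_iff.2 fun α hα => by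
    obtain ⟨β, ⟨hβD, hβL⟩, hαβ⟩ := hcof α hα
    exact ⟨β, hC.accPointsω₁_subset hβD, hαβ, hL.subset_Iio hδ hlim hβL⟩
  obtain ⟨α, hα, htail | hdisj⟩ := hmeas δ hδC hlim <;>
    obtain ⟨β, ⟨hβD, hβL⟩, hαβ⟩ := hcof α hα <;>
    have hβδ := hL.subset_Iio hδ hlim hβL
  · refine infinite_inter_Ico_of_sSup_inter_Iio_eq hβD.2.2 hαβ
      ((hL.finite_inter_Iic hδ hlim hβδ).subset ?_)
    rintro x ⟨hxC, hαx, hxβ⟩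
    exact ⟨htail ⟨⟨hxC, hxβ.trans hβδ⟩, not_lt.2 hαx⟩, hxβ.le⟩
  · exact hdisj.subset ⟨⟨⟨hC.accPointsω₁_subset hβD, hβδ⟩, not_lt.2 hαβ.le⟩, hβL⟩
end

section
/- M_𝔰 is false, where 𝔰 is the splitting number: there exists a family 𝒞 of closed subsets of ω₁ with |𝒞| ≤ 𝔰 such that no club C ⊆ ω₁ measures every member of 𝒞. -/
/-- A splitting family on `ω`. -/
def IsSplittingFamily (𝒳 : Set (Set ℕ)) : Prop :=
  (∀ X ∈ 𝒳, X.Infinite) ∧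
    ∀ Y : Set ℕ, Y.Infinite → ∃ X ∈ 𝒳, (X ∩ Y).Infinite ∧ (Y \ X).Infinite

/-- The splitting number `𝔰`. -/
noncomputable def splittingNumber : Cardinal.{0} :=
  sInf {c | ∃ 𝒳 : Set (Set ℕ), IsSplittingFamily 𝒳 ∧ Cardinal.mk 𝒳 = c}

open Set Filter Topology Cardinal

/-! The counterexample to `M_𝔰`: fix a splitting family `𝒳` of size `𝔰` and, for every countable
limit `δ`, a sequence `e` increasing to `δ`; it cuts `δ` into the blocks `(e n, e (n+1)]`. For
`X ∈ 𝒳` let `D` be `δ` together with the blocks indexed by `X`; this is closed. Given a club `C`,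
take `δ ∈ C` a limit of points of `C`. Infinitely many blocks meet `C`, and a member `X` of `𝒳`
splits their index set, so every tail of `C ∩ δ` meets both `D` and its complement: `C` does not
measure `D` at `δ`. There are `𝔰 · ℵ₁ = 𝔰` sets `D`, since splitting families are uncountable. -/

theorem isSplittingFamily_setOf_infinite : IsSplittingFamily {X : Set ℕ | X.Infinite} := by
  refine ⟨fun X hX => hX, fun Y hY => ?_⟩
  obtain ⟨t, u, rfl, htu, hcard⟩ := hY.exists_union_disjoint_cardinal_eq_of_infinite
  have ht_iff_hu : t.Infinite ↔ u.Infinite := by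
    rw [← infinite_coe_iff, ← infinite_coe_iff, Cardinal.infinite_iff, Cardinal.infinite_iff,
      hcard]
  have ht : t.Infinite := (infinite_union.1 hY).elim id ht_iff_hu.2
  refine ⟨t, ht, ?_, ?_⟩
  · rwa [inter_eq_left.2 subset_union_left]
  · rwa [union_sdiff_left, htu.symm.sdiff_eq_left, ← ht_iff_hu]

/-- Compactness of the Cantor space `𝒳 → Bool` yields a subsequence along which membership in
each `X ∈ 𝒳` is eventually constant. -/
theorem exists_infinite_forall_finite_inter_or_finite_diff {𝒳 : Set (Set ℕ)} (h𝒳 : 𝒳.Countable) :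
    ∃ Y : Set ℕ, Y.Infinite ∧ ∀ X ∈ 𝒳, (X ∩ Y).Finite ∨ (Y \ X).Finite := by
  classical
  have := h𝒳.to_subtype
  obtain ⟨a, φ, hφ, hlim⟩ :=
    CompactSpace.tendsto_subseq fun k : ℕ => fun X : 𝒳 => decide (k ∈ (X : Set ℕ))
  refine ⟨range φ, infinite_range_of_injective hφ.injective, fun X hX => ?_⟩
  have hev := tendsto_pi_nhds.1 hlim ⟨X, hX⟩
  rw [nhds_discrete, tendsto_pure, eventually_atTop] at hev
  obtain ⟨N, hN⟩ := hev
  have hfin := (finite_Iio N).image φ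
  cases hXa : a ⟨X, hX⟩
  · refine .inl (hfin.subset ?_)
    rintro _ ⟨hx, j, rfl⟩
    refine ⟨j, mem_Iio.2 (not_le.1 fun hj => ?_), rfl⟩
    simpa [hXa, hx] using hN j hj
  · refine .inr (hfin.subset ?_)
    rintro _ ⟨⟨j, rfl⟩, hx⟩
    refine ⟨j, mem_Iio.2 (not_le.1 fun hj => ?_), rfl⟩
    simpa [hXa, hx] using hN j hj

theorem IsSplittingFamily.aleph_one_le_mk {𝒳 : Set (Set ℕ)} (h : IsSplittingFamily 𝒳) :
    ℵ₁ ≤ #𝒳 := by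
  by_contra hlt
  rw [not_le, lt_aleph_one_iff, le_aleph0_iff_set_countable] at hlt
  obtain ⟨Y, hY, hYX⟩ := exists_infinite_forall_finite_inter_or_finite_diff hlt
  obtain ⟨X, hX, hXY, hYX'⟩ := h.2 Y hY
  exact (hYX X hX).elim hXY hYX'

theorem exists_isSplittingFamily_mk_eq_splittingNumber :
    ∃ 𝒳, IsSplittingFamily 𝒳 ∧ #𝒳 = splittingNumber :=
  csInf_mem (⟨_, _, isSplittingFamily_setOf_infinite, rfl⟩ :
    {c | ∃ 𝒳 : Set (Set ℕ), IsSplittingFamily 𝒳 ∧ #𝒳 = c}.Nonempty)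

theorem mk_prod_toType_omega1_le {α : Type} (h : ℵ₁ ≤ #α) : #(α × omega1.ToType) ≤ #α := by
  rw [mk_prod, mk_toType, omega1, card_ord, lift_id, lift_id]
  exact (mul_eq_left ((aleph0_le_aleph 1).trans h) h (aleph_pos 1).ne').le

namespace Ordinal

/-- For `e` increasing to `δ` this is `{δ} ∪ ⋃ n ∈ X, (e n, e (n+1)]`; written as a difference of
an interval and open blocks, its closedness is immediate. -/
def blockSet (δ : Ordinal) (e : ℕ → Ordinal) (X : Set ℕ) : Set Ordinal :=
  Ioc (e 0) δ \ ⋃ n ∉ X, Ioc (e n) (e (n + 1))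

def meetingBlocks (C : Set Ordinal) (e : ℕ → Ordinal) : Set ℕ :=
  {n | (C ∩ Ioc (e n) (e (n + 1))).Nonempty}

theorem _root_.IsClosed.isClosedIn {D : Set Ordinal} (hD : IsClosed D) (β : Ordinal) :
    IsClosedIn D β := by
  intro γ _ hγ hsup
  have hne : (D ∩ Iio γ).Nonempty := by
    rw [nonempty_iff_ne_empty]
    rintro hempty
    rw [hempty, csSup_empty, bot_eq_zero] at hsup
    exact hγ hsup.symm
  have hlub : IsLUB (D ∩ Iio γ) γ := by
    have := isLUB_csSup hne ⟨γ, fun _ h => h.2.le⟩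
    rwa [hsup] at this
  exact hD.closure_subset (closure_mono inter_subset_left (hlub.mem_closure hne))

theorem isClosed_blockSet (δ : Ordinal) (e : ℕ → Ordinal) (X : Set ℕ) :
    IsClosed (blockSet δ e X) := by
  refine IsClosed.sdiff ?_ (isOpen_biUnion fun n _ => ?_)
  · rw [← Order.Icc_succ_left]
    exact isClosed_Icc
  · rw [← Order.Ioo_succ_right]
    exact isOpen_Ioo

theorem blockSet_subset_Iic (δ : Ordinal) (e : ℕ → Ordinal) (X : Set ℕ) :
    blockSet δ e X ⊆ Iic δ :=
  fun _ h => h.1.2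

section IncreasingSequence

variable {δ α γ : Ordinal} {e : ℕ → Ordinal} {C : Set Ordinal} {X : Set ℕ}
  (hδ : ⨆ n, e n = δ)
include hδ

theorem exists_lt_of_iSup_eq (hα : α < δ) : ∃ n, α < e n :=
  Ordinal.lt_iSup_iff.1 (hδ ▸ hα)

variable (he : StrictMono e)
include he

theorem lt_of_strictMono_iSup_eq (n : ℕ) : e n < δ :=
  hδ ▸ (he n.lt_succ_self).trans_le (Ordinal.le_iSup e _)

theorem exists_mem_Ioc_of_strictMono_iSup_eq {N : ℕ} (hN : e N < γ) (hγ : γ < δ) :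
    ∃ n, N ≤ n ∧ γ ∈ Ioc (e n) (e (n + 1)) := by
  classical
  have hex : ∃ k, γ ≤ e k :=
    (exists_lt_of_iSup_eq hδ hγ).imp fun _ => le_of_lt
  have hNk : N < Nat.find hex := not_le.1 fun hk =>
    (Nat.find_spec hex).not_gt ((he.monotone hk).trans_lt hN)
  obtain ⟨n, hn⟩ := Nat.exists_eq_add_one_of_ne_zero (Nat.ne_zero_of_lt hNk)
  exact ⟨n, by omega, not_le.1 (Nat.find_min hex (by omega)), hn ▸ Nat.find_spec hex⟩

theorem mem_blockSet_iff {n : ℕ} (hγ : γ ∈ Ioc (e n) (e (n + 1))) :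
    γ ∈ blockSet δ e X ↔ n ∈ X := by
  have hblock : ∀ m, γ ∈ Ioc (e m) (e (m + 1)) → m = n := fun m hm => by
    have := he.lt_iff_lt.1 (hm.1.trans_le hγ.2)
    have := he.lt_iff_lt.1 (hγ.1.trans_le hm.2)
    omega
  simp only [blockSet, Set.mem_sdiff, mem_iUnion, not_exists]
  refine ⟨fun h => not_not.1 fun hn => h.2 n hn hγ, fun hn => ⟨?_, fun m hm hγm => ?_⟩⟩
  · exact ⟨(he.monotone n.zero_le).trans_lt hγ.1,
      hγ.2.trans (lt_of_strictMono_iSup_eq hδ he _).le⟩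
  · exact hm (hblock m hγm ▸ hn)

theorem infinite_meetingBlocks (hC : ∀ β < δ, ∃ γ ∈ C, β < γ ∧ γ < δ) :
    (meetingBlocks C e).Infinite := by
  refine infinite_of_forall_exists_gt fun N => ?_
  obtain ⟨γ, hγC, hNγ, hγδ⟩ := hC _ (lt_of_strictMono_iSup_eq hδ he (N + 1))
  obtain ⟨n, hn, hγn⟩ := exists_mem_Ioc_of_strictMono_iSup_eq hδ he hNγ hγδ
  exact ⟨n, ⟨γ, hγC, hγn⟩, hn⟩

theorem exists_mem_tail_of_infinite {S : Set ℕ} (hS : S.Infinite) (hSC : S ⊆ meetingBlocks C e)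
    (hα : α < δ) : ∃ n ∈ S, ∃ γ ∈ (C ∩ Iio δ) \ Iio α, γ ∈ Ioc (e n) (e (n + 1)) := by
  obtain ⟨j, hj⟩ := exists_lt_of_iSup_eq hδ hα
  obtain ⟨n, hnS, hjn⟩ := hS.exists_gt j
  obtain ⟨γ, hγC, hγ⟩ := hSC hnS
  exact ⟨n, hnS, γ, ⟨⟨hγC, hγ.2.trans_lt (lt_of_strictMono_iSup_eq hδ he _)⟩,
    not_lt.2 (hj.trans ((he hjn).trans hγ.1)).le⟩, hγ⟩

theorem not_measures_blockSet (hXC : (X ∩ meetingBlocks C e).Infinite)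
    (hCX : (meetingBlocks C e \ X).Infinite) (hα : α < δ) :
    ¬ ((C ∩ Iio δ) \ Iio α ⊆ blockSet δ e X ∨ ((C ∩ Iio δ) \ Iio α) ∩ blockSet δ e X = ∅) := by
  rintro (hsub | hdisj)
  · obtain ⟨n, hn, γ, hγ, hγn⟩ := exists_mem_tail_of_infinite hδ he hCX sdiff_subset hα
    exact hn.2 ((mem_blockSet_iff hδ he hγn).1 (hsub hγ))
  · obtain ⟨n, hn, γ, hγ, hγn⟩ := exists_mem_tail_of_infinite hδ he hXC inter_subset_right hα
    exact (hdisj ▸ ⟨hγ, (mem_blockSet_iff hδ he hγn).2 hn.1⟩ : γ ∈ (∅ : Set Ordinal))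

end IncreasingSequence

/-- Junk unless `δ` is the supremum of some strictly increasing sequence. -/
noncomputable def omegaSeq (δ : Ordinal) : ℕ → Ordinal :=
  Classical.epsilon fun e => StrictMono e ∧ ⨆ n, e n = δ

theorem omegaSeq_spec {δ : Ordinal} (h : ∃ e : ℕ → Ordinal, StrictMono e ∧ ⨆ n, e n = δ) :
    StrictMono (omegaSeq δ) ∧ ⨆ n, omegaSeq δ n = δ :=
  Classical.epsilon_spec h

end Ordinal

namespace IsClubOmega1

variable {C : Set Ordinal} (hC : IsClubOmega1 C)
include hC

theorem exists_strictMono : ∃ f : ℕ → Ordinal, StrictMono f ∧ ∀ n, f n ∈ C := by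
  obtain ⟨β, hβ, -⟩ := hC.2.2 0 (Cardinal.lt_ord.2 (by simp))
  have : NoMaxOrder C := ⟨fun c => let ⟨β, hβ, h⟩ := hC.2.2 c (hC.1 c.2); ⟨⟨β, hβ⟩, h⟩⟩
  obtain ⟨f, hf, -⟩ := Nat.exists_strictMono' (⟨β, hβ⟩ : C)
  exact ⟨fun n => (f n : Ordinal), (Subtype.strictMono_coe _).comp hf, fun n => (f n).2⟩

theorem iSup_lt_omega1 {f : ℕ → Ordinal} (hfC : ∀ n, f n ∈ C) : ⨆ n, f n < omega1 := by
  have hfω : ∀ n, f n < omega1 := fun n => hC.1 (hfC n)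
  rw [show omega1 = Ordinal.omega 1 from ord_aleph 1] at hfω ⊢
  exact Ordinal.iSup_lt_omega_one hfω

theorem iSup_mem_s3 {f : ℕ → Ordinal} (hf : StrictMono f) (hfC : ∀ n, f n ∈ C) : ⨆ n, f n ∈ C := by
  have hlt : ∀ n, f n < ⨆ n, f n := Ordinal.lt_of_strictMono_iSup_eq rfl hf
  refine hC.2.1 _ (hC.iSup_lt_omega1 hfC) (zero_le.trans_lt (hlt 0)).ne' (le_antisymm ?_ ?_)
  · exact csSup_le ⟨f 0, hfC 0, hlt 0⟩ fun _ h => h.2.le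
  · exact Ordinal.iSup_le fun n => le_csSup ⟨_, fun _ h => h.2.le⟩ ⟨hfC n, hlt n⟩

end IsClubOmega1

open Ordinal

/-- `M_𝔰` fails: there is a family of at most `𝔰` many closed subsets of `ω₁`
which no club measures. -/
theorem stmt3 :
    ∃ (ι : Type) (Dfam : ι → Set Ordinal),
      Cardinal.mk ι ≤ splittingNumber ∧
      (∀ i, Dfam i ⊆ Set.Iio omega1 ∧ IsClosedIn (Dfam i) omega1) ∧
      ∀ C, IsClubOmega1 C →
        ¬ (∀ i, ∀ δ ∈ C, ∃ α < δ, ((C ∩ Set.Iio δ) \ Set.Iio α ⊆ Dfam i ∨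
            ((C ∩ Set.Iio δ) \ Set.Iio α) ∩ Dfam i = ∅)) := by
  obtain ⟨𝒳, h𝒳, h𝒳card⟩ := exists_isSplittingFamily_mk_eq_splittingNumber
  refine ⟨𝒳 × omega1.ToType, fun i => blockSet i.2 (omegaSeq i.2) i.1,
    h𝒳card ▸ mk_prod_toType_omega1_le h𝒳.aleph_one_le_mk, fun i => ⟨?_, ?_⟩, ?_⟩
  · exact fun γ hγ => mem_Iio.2 <| (blockSet_subset_Iic _ _ _ hγ).trans_lt (ToType.toOrd i.2).2
  · exact (isClosed_blockSet _ _ _).isClosedIn _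
  intro C hC hmeas
  obtain ⟨f, hf, hfC⟩ := hC.exists_strictMono
  obtain ⟨he, heδ⟩ := omegaSeq_spec ⟨f, hf, rfl⟩
  have hK : (meetingBlocks C (omegaSeq (⨆ n, f n))).Infinite :=
    infinite_meetingBlocks heδ he fun β hβ =>
      let ⟨n, hn⟩ := exists_lt_of_iSup_eq rfl hβ
      ⟨f n, hfC n, hn, lt_of_strictMono_iSup_eq rfl hf n⟩
  obtain ⟨X, hX, hXK, hKX⟩ := h𝒳.2 _ hK
  obtain ⟨α, hα, hmeasα⟩ := hmeas (⟨X, hX⟩, ToType.mk ⟨_, hC.iSup_lt_omega1 hfC⟩) _ (hC.iSup_mem_s3 hf hfC)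
  simp only [ToType.toOrd, OrderIso.symm_apply_apply] at hmeasα
  exact not_measures_blockSet heδ he hXK hKX hα hmeasα
end

section
/- Let (C_δ : δ ∈ Lim(ω₁)) be a ladder system where each C_δ(n) (the n-th element in the increasing enumeration of C_δ) is a successor ordinal, let X ⊆ ω be infinite and co-infinite witnessing splitting of Y = {n : [C_δ(n), C_δ(n+1)) ∩ D ≠ ∅} for a club D and δ a limit point of D, and set Z = ⋃{[C_δ(n), C_δ(n+1)) : n ∈ X} ∪ {δ}. If X ∩ Y and Y \ X are both infinite, then Z ∩ D and D \ Z are both cofinal in δ. -/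
open Set

section LadderBlocks

variable {α : Type*} [LinearOrder α] {f : ℕ → α}

theorem Monotone.mem_biUnion_Ico_succ_iff (hf : Monotone f) {X : Set ℕ} {n : ℕ} {ξ : α}
    (hξ : ξ ∈ Ico (f n) (f (n + 1))) :
    ξ ∈ ⋃ m ∈ X, Ico (f m) (f (m + 1)) ↔ n ∈ X := by
  refine ⟨fun h => ?_, fun hn => mem_biUnion hn hξ⟩
  obtain ⟨m, hm, hξm⟩ := mem_iUnion₂.1 h
  obtain rfl : m = n := by
    by_contra hmn
    exact Set.disjoint_left.1 (hf.pairwise_disjoint_on_Ico_succ hmn) hξm hξ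
  exact hm

theorem exists_mem_Ico_succ_inter_gt (hf : Monotone f) {a : α} (ha : ∃ m, a < f m)
    {D : Set α} {S : Set ℕ} (hS : S.Infinite)
    (hSD : S ⊆ {n | (Ico (f n) (f (n + 1)) ∩ D).Nonempty}) :
    ∃ n ∈ S, ∃ ξ ∈ Ico (f n) (f (n + 1)), ξ ∈ D ∧ a < ξ := by
  obtain ⟨m, ham⟩ := ha
  obtain ⟨n, hnS, hmn⟩ := hS.exists_gt m
  obtain ⟨ξ, hξ, hξD⟩ := hSD hnS
  exact ⟨n, hnS, ξ, hξ, hξD, ham.trans_le ((hf hmn.le).trans hξ.1)⟩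

end LadderBlocks

theorem stmt4_general (δ : Ordinal)
    (f : ℕ → Ordinal) (hmono : StrictMono f) (hfδ : ∀ n, f n < δ)
    (hcof : ∀ α < δ, ∃ n, α < f n)
    (D : Set Ordinal)
    (X : Set ℕ)
    (Y : Set ℕ) (hY : Y = {n | (Set.Ico (f n) (f (n + 1)) ∩ D).Nonempty})
    (Z : Set Ordinal) (hZ : Z = (⋃ n ∈ X, Set.Ico (f n) (f (n + 1))) ∪ {δ})
    (h1 : (X ∩ Y).Infinite) (h2 : (Y \ X).Infinite) :
    (∀ α < δ, ∃ ξ ∈ Z ∩ D, α < ξ ∧ ξ < δ) ∧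
      (∀ α < δ, ∃ ξ ∈ D \ Z, α < ξ ∧ ξ < δ) := by
  subst hY hZ
  refine ⟨fun α hα => ?_, fun α hα => ?_⟩
  · obtain ⟨n, ⟨hnX, -⟩, ξ, hξ, hξD, hαξ⟩ :=
      exists_mem_Ico_succ_inter_gt hmono.monotone (hcof α hα) h1 inter_subset_right
    exact ⟨ξ, ⟨Or.inl ((hmono.monotone.mem_biUnion_Ico_succ_iff hξ).2 hnX), hξD⟩, hαξ,
      hξ.2.trans (hfδ _)⟩
  · obtain ⟨n, ⟨-, hnX⟩, ξ, hξ, hξD, hαξ⟩ :=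
      exists_mem_Ico_succ_inter_gt hmono.monotone (hcof α hα) h2 sdiff_subset
    have hξδ : ξ < δ := hξ.2.trans (hfδ _)
    refine ⟨ξ, ⟨hξD, ?_⟩, hαξ, hξδ⟩
    rintro (hξZ | rfl)
    · exact hnX ((hmono.monotone.mem_biUnion_Ico_succ_iff hξ).1 hξZ)
    · exact hξδ.false

theorem stmt4 (δ : Ordinal) (hδ : δ < omega1) (hδlim : Order.IsSuccLimit δ)
    (f : ℕ → Ordinal) (hmono : StrictMono f) (hfδ : ∀ n, f n < δ)
    (hcof : ∀ α < δ, ∃ n, α < f n)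
    (hsucc : ∀ n, ∃ γ, f n = γ + 1)
    (D : Set Ordinal) (hD : IsClubOmega1 D)
    (hlp : sSup (D ∩ Set.Iio δ) = δ)
    (X : Set ℕ) (hXinf : X.Infinite) (hXcoinf : (Set.univ \ X).Infinite)
    (Y : Set ℕ) (hY : Y = {n | (Set.Ico (f n) (f (n + 1)) ∩ D).Nonempty})
    (Z : Set Ordinal) (hZ : Z = (⋃ n ∈ X, Set.Ico (f n) (f (n + 1))) ∪ {δ})
    (h1 : (X ∩ Y).Infinite) (h2 : (Y \ X).Infinite) :
    (∀ α < δ, ∃ ξ ∈ Z ∩ D, α < ξ ∧ ξ < δ) ∧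
      (∀ α < δ, ∃ ξ ∈ D \ Z, α < ξ ∧ ξ < δ) :=
  stmt4_general δ f hmono hfδ hcof D X Y hY Z hZ h1 h2
end

section
/- Assume ZF and that the club filter 𝒞_{ω₁} on ω₁ is a normal filter. Suppose (X_δ : δ ∈ Lim(ω₁)) is a sequence with each X_δ ⊆ δ, such that for all α < ω₁, either W_α⁰ = {δ < ω₁ : α ∉ X_δ} ∈ 𝒞_{ω₁} or W_α¹ = {δ < ω₁ : α ∈ X_δ} ∈ 𝒞_{ω₁}. Then there is a set W* ∈ 𝒞_{ω₁} such that X_{δ₀} = X_{δ₁} ∩ δ₀ for all δ₀ < δ₁ in W*. -/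
/-- The collection `𝒞_{ω₁}` of subsets of `ω₁` containing a club. -/
def ClubFilter : Set (Set Ordinal) :=
  {X | ∃ C, IsClubω₁ C ∧ C ⊆ X}

/-- Normality of `𝒞_{ω₁}`: closure under diagonal intersections. -/
def ClubFilterNormal : Prop :=
  ∀ W : Ordinal → Set Ordinal, (∀ α, α < omega1 → W α ∈ ClubFilter) →
    {δ | δ < omega1 ∧ ∀ α < δ, δ ∈ W α} ∈ ClubFilter

/-! Membership of each `α` in `X δ` is constant on some `W α ∈ 𝒞_{ω₁}`; on the diagonal
intersection of the `W α`, any two points `δ₀ < δ₁` therefore agree on every `α < δ₀`, which is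
exactly `X δ₀ = X δ₁ ∩ δ₀`. Removing `0`, where the diagonal condition is vacuous, makes every
point of it a limit ordinal. -/

theorem Set.eq_inter_Iio_of_forall_lt_mem_iff {ι : Type*} [Preorder ι] {A B : Set ι} {d : ι}
    (hA : A ⊆ Set.Iio d) (hAB : ∀ a < d, a ∈ A ↔ a ∈ B) : A = B ∩ Set.Iio d := by
  ext a
  exact ⟨fun ha => ⟨(hAB a (hA ha)).1 ha, hA ha⟩, fun ⟨hb, had⟩ => (hAB a had).2 hb⟩

theorem exists_mem_forall_iff_of_or {β : Type*} {F : Set (Set β)} (Q P : β → Prop)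
    (h : {b | Q b ∧ ¬P b} ∈ F ∨ {b | Q b ∧ P b} ∈ F) :
    ∃ W ∈ F, (∀ b ∈ W, Q b) ∧ ∀ b ∈ W, ∀ b' ∈ W, (P b ↔ P b') := by
  rcases h with h | h
  · exact ⟨_, h, fun b hb => hb.1, fun b hb b' hb' => iff_of_false hb.2 hb'.2⟩
  · exact ⟨_, h, fun b hb => hb.1, fun b hb b' hb' => iff_of_true hb.2 hb'.2⟩

theorem IsClubω₁.diff_zero {C : Set Ordinal} (hC : IsClubω₁ C) : IsClubω₁ (C \ {0}) := by
  obtain ⟨hsub, hclosed, hunbdd⟩ := hC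
  refine ⟨fun x hx => hsub hx.1, fun δ hδ hδ0 hsup => ⟨?_, hδ0⟩, fun α hα => ?_⟩
  · have hne : ((C \ {0}) ∩ Set.Iio δ).Nonempty := by
      by_contra h
      rw [Set.not_nonempty_iff_eq_empty.1 h, csSup_empty] at hsup
      exact hδ0 hsup.symm
    refine hclosed δ hδ hδ0 (le_antisymm (csSup_le' fun x hx => hx.2.le) ?_)
    calc δ = sSup ((C \ {0}) ∩ Set.Iio δ) := hsup.symm
      _ ≤ sSup (C ∩ Set.Iio δ) :=
        csSup_le_csSup ⟨δ, fun x hx => hx.2.le⟩ hne fun x hx => ⟨hx.1.1, hx.2⟩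
  · obtain ⟨β, hβC, hαβ⟩ := hunbdd α hα
    exact ⟨β, ⟨hβC, (pos_of_gt hαβ).ne'⟩, hαβ⟩

theorem clubFilter_sep_pos {S : Set Ordinal} (hS : S ∈ ClubFilter) :
    {δ ∈ S | 0 < δ} ∈ ClubFilter := by
  obtain ⟨C, hC, hCS⟩ := hS
  exact ⟨C \ {0}, hC.diff_zero, fun x hx => ⟨hCS hx.1, pos_iff_ne_zero.2 hx.2⟩⟩

theorem stmt5 (hnormal : ClubFilterNormal)
    (X : Ordinal → Set Ordinal)
    (hX : ∀ δ, δ < omega1 → Order.IsSuccLimit δ → X δ ⊆ Set.Iio δ)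
    (hdich : ∀ α, α < omega1 →
      {δ | δ < omega1 ∧ Order.IsSuccLimit δ ∧ α ∉ X δ} ∈ ClubFilter ∨
      {δ | δ < omega1 ∧ Order.IsSuccLimit δ ∧ α ∈ X δ} ∈ ClubFilter) :
    ∃ W ∈ ClubFilter, ∀ δ₀ ∈ W, ∀ δ₁ ∈ W, δ₀ < δ₁ → X δ₀ = X δ₁ ∩ Set.Iio δ₀ := by
  have hhom : ∀ α, ∃ W : Set Ordinal, α < omega1 → W ∈ ClubFilter ∧
      (∀ δ ∈ W, δ < omega1 ∧ Order.IsSuccLimit δ) ∧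
      ∀ δ ∈ W, ∀ δ' ∈ W, (α ∈ X δ ↔ α ∈ X δ') := by
    intro α
    by_cases hα : α < omega1
    · obtain ⟨W, hW⟩ := exists_mem_forall_iff_of_or
        (fun δ => δ < omega1 ∧ Order.IsSuccLimit δ) (fun δ => α ∈ X δ)
        (by simpa only [and_assoc] using hdich α hα)
      exact ⟨W, fun _ => hW⟩
    · exact ⟨∅, fun h => absurd h hα⟩
  choose W hW using hhom
  refine ⟨_, clubFilter_sep_pos (hnormal W fun α hα => (hW α hα).1), ?_⟩
  rintro δ₀ ⟨⟨hδ₀, hW₀⟩, hpos⟩ δ₁ ⟨⟨-, hW₁⟩, -⟩ hlt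
  have hlim : Order.IsSuccLimit δ₀ := ((hW 0 (hpos.trans hδ₀)).2.1 δ₀ (hW₀ 0 hpos)).2
  exact Set.eq_inter_Iio_of_forall_lt_mem_iff (hX δ₀ hδ₀ hlim) fun α hα =>
    (hW α (hα.trans hδ₀)).2.2 δ₀ (hW₀ α hα) δ₁ (hW₁ α (hα.trans hlt))
end

section
/- Bounding sequences exist and can be refined: let β < κ be a limit ordinal, α₀ < β, and 𝒩 a finite closed symmetric system of elementary submodels of H(κ). Then (i) there is a bounding sequence for 𝒩 relative to α₀ below β; (ii) if Z ⊆ β is cofinal in β with α₀ + 1 ∈ Z, there is a bounding sequence all of whose members are in Z; (iii) the increasing enumeration of any infinite subsequence of a bounding sequence whose first member is α₀ + 1 is again a bounding sequence. -/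
open FirstOrder

/-- The von Neumann ordinal in `ZFSet` corresponding to an ordinal (as a `PSet`). -/
noncomputable def ordToPSet : Ordinal.{0} → PSet.{0} :=
  fun o =>
    letI : IsWellOrder o.ToType (· < ·) := isWellOrder_lt
    ⟨o.ToType, fun i => ordToPSet (Ordinal.typein (α := o.ToType) (· < ·) i)⟩
termination_by o => o
decreasing_by exact Ordinal.typein_lt_self i

/-- The von Neumann ordinal in `ZFSet` corresponding to an ordinal. -/
noncomputable def ordToZF (o : Ordinal.{0}) : ZFSet.{0} :=
  ZFSet.mk (ordToPSet o)

/-- `H(κ)`: sets hereditarily of cardinality less than `κ`. -/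
def HSet (κ : Cardinal.{0}) : Set ZFSet.{0} :=
  {x | ∃ t : ZFSet, t.IsTransitive ∧ x ∈ t ∧ Cardinal.mk t.toSet < Cardinal.lift.{1} κ}

/-- The first-order language with one binary relation (membership) and one
unary relation (a predicate). -/
def mLang : FirstOrder.Language where
  Functions := fun _ => Empty
  Relations := fun n => match n with
    | 1 => Unit
    | 2 => Unit
    | _ => Empty

/-- The `mLang`-structure on a set `A` of `ZFSet`s, with `∈` as the binary
relation and (membership in) `T` as the unary predicate. -/
def zStr (T : Set ZFSet) (A : Set ZFSet) : mLang.Structure ↥A where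
  funMap := fun {_} f _ => f.elim
  RelMap := fun {n} r v =>
    match n, r, v with
    | 1, _, v => (v 0 : ZFSet) ∈ T
    | 2, _, v => (v 0 : ZFSet) ∈ (v 1 : ZFSet)

/-- `N` is an elementary submodel of `(A; ∈, T)`. -/
def ElemIn (T : Set ZFSet) (N A : Set ZFSet) : Prop :=
  ∃ h : N ⊆ A, ∀ (n : ℕ) (φ : mLang.Formula (Fin n)) (v : Fin n → ↥N),
    (letI := zStr T A
     φ.Realize (fun i => Set.inclusion h (v i))) ↔
    (letI := zStr T N
     φ.Realize v)

/-- The trace of `N` on the countable ordinals: `N ∩ ω₁`. -/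
def htr (N : ZFSet) : Set Ordinal :=
  {o | o < (Cardinal.aleph 1).ord ∧ ordToZF o ∈ N}

/-- `f` is an isomorphism between `(N; ∈, T)` and `(N'; ∈, T)`. -/
def IsIsoZ (T : Set ZFSet) (N N' : ZFSet) (f : ZFSet → ZFSet) : Prop :=
  Set.BijOn f N.toSet N'.toSet ∧
    (∀ x ∈ N.toSet, ∀ y ∈ N.toSet, (x ∈ y ↔ f x ∈ f y)) ∧
    (∀ x ∈ N.toSet, (x ∈ T ↔ f x ∈ T))

/-- `cl(N)`: `N` together with the closure of `N ∩ Ord` in the order topology. -/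
def clZ (N : ZFSet) : Set ZFSet :=
  N.toSet ∪
    {z | ∃ α : Ordinal, Order.IsSuccLimit α ∧ sSup {b | b < α ∧ ordToZF b ∈ N} = α ∧ z = ordToZF α}

/-- The order type of a set of ordinals. -/
noncomputable def otype (s : Set Ordinal) : Ordinal :=
  letI : IsWellOrder s (· < ·) := isWellOrder_lt
  Ordinal.type (α := s) (· < ·)

/-- The canonical extension of the isomorphism `f : N → N'` to `cl(N)` is the
identity on `cl(N) ∩ cl(N')`. -/
def CanonExtId (N N' : ZFSet) (f : ZFSet → ZFSet) : Prop :=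
  (∀ x ∈ N.toSet ∩ clZ N', f x = x) ∧
  ∀ α : Ordinal, Order.IsSuccLimit α → sSup {b | b < α ∧ ordToZF b ∈ N} = α → ordToZF α ∈ clZ N' →
    sSup {b | ∃ a, a < α ∧ ordToZF a ∈ N ∧ f (ordToZF a) = ordToZF b} = α

/-- A `T`-symmetric system of countable elementary submodels of `(H(θ); ∈, T)`. -/
structure IsTSymmetricSystem (θ : Cardinal.{0}) (T : Set ZFSet) (𝒩 : Set ZFSet) : Prop where
  finite : 𝒩.Finite
  countable : ∀ N ∈ 𝒩, N.toSet.Countable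
  hasHeight : ∀ N ∈ 𝒩, ∃ δ, δ < (Cardinal.aleph 1).ord ∧ htr N = Set.Iio δ
  elem : ∀ N ∈ 𝒩, ElemIn T N.toSet (HSet θ)
  iso_exists : ∀ N ∈ 𝒩, ∀ N' ∈ 𝒩, N ≠ N' → htr N = htr N' → ∃ f, IsIsoZ T N N' f
  iso_unique : ∀ N ∈ 𝒩, ∀ N' ∈ 𝒩, N ≠ N' → htr N = htr N' →
    ∀ f g, IsIsoZ T N N' f → IsIsoZ T N N' g → Set.EqOn f g N.toSet
  iso_id : ∀ N ∈ 𝒩, ∀ N' ∈ 𝒩, N ≠ N' → htr N = htr N' →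
    ∀ f, IsIsoZ T N N' f → ∀ x ∈ N.toSet ∩ N'.toSet, f x = x
  cover : ∀ N ∈ 𝒩, ∀ M ∈ 𝒩,
    (∃ δM δN, htr M = Set.Iio δM ∧ htr N = Set.Iio δN ∧ δM < δN) →
    ∃ N' ∈ 𝒩, htr N' = htr N ∧ M ∈ N'
  isoImage : ∀ N ∈ 𝒩, ∀ N' ∈ 𝒩, N ≠ N' → htr N = htr N' → ∀ M ∈ 𝒩, M ∈ N →
    ∀ f, IsIsoZ T N N' f → f M ∈ 𝒩

/-- The closedness condition on a `T`-symmetric system: the canonical extension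
of each isomorphism `Ψ_{N,N'}` to `cl(N)` is the identity on `cl(N) ∩ cl(N')`. -/
def ClosedIsoProp (T : Set ZFSet) (𝒩 : Set ZFSet) : Prop :=
  ∀ N ∈ 𝒩, ∀ N' ∈ 𝒩, N ≠ N' → htr N = htr N' → ∀ f, IsIsoZ T N N' f → CanonExtId N N' f

/-- A closed `T`-symmetric system. -/
def IsClosedTSymmetricSystem (θ : Cardinal.{0}) (T : Set ZFSet) (𝒩 : Set ZFSet) : Prop :=
  IsTSymmetricSystem θ T 𝒩 ∧ ClosedIsoProp T 𝒩

/-- `β_Q`: the largest ordinal of `cl(Q)` below `β` (as a supremum). -/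
noncomputable def clTraceMax (Q : ZFSet) (β : Ordinal) : Ordinal :=
  sSup {o | o < β ∧ ordToZF o ∈ clZ Q}

/-- A bounding sequence for `𝒩` relative to `α₀` below `β`. -/
def BoundingSeq (T : Set ZFSet) (𝒩 : Set ZFSet) (α₀ β : Ordinal) (ρ : ℕ → Ordinal) : Prop :=
  StrictMono ρ ∧ (∀ i, ρ i < β) ∧ ρ 0 = α₀ + 1 ∧
  ∀ i : ℕ, ∀ Q₀ ∈ 𝒩, ∀ Q₁ ∈ 𝒩, htr Q₀ = htr Q₁ → ∀ f, IsIsoZ T Q₀ Q₁ f →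
    sSup ({b | ∃ a, a < ρ i ∧ ordToZF a ∈ Q₀ ∧ f (ordToZF a) = ordToZF b} ∩
        Set.Iio (min (clTraceMax Q₀ β) (clTraceMax Q₁ β))) <
      min (clTraceMax Q₀ β) (clTraceMax Q₁ β) →
    sSup ({b | ∃ a, a < ρ i ∧ ordToZF a ∈ Q₀ ∧ f (ordToZF a) = ordToZF b} ∩
        Set.Iio (min (clTraceMax Q₀ β) (clTraceMax Q₁ β))) < ρ (i + 1)

/-!
For a fixed pair `Q₀, Q₁ ∈ 𝒩` of the same height there is only one isomorphism `Ψ_{Q₀,Q₁}`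
to consider: for `Q₀ ≠ Q₁` this is part of the definition of a symmetric system, and an
automorphism of an (extensional) elementary submodel of `H(κ)` is the identity by
`∈`-induction. Hence for each `x` the suprema `sup (Ψ''x ∩ (β)_{Q₀,Q₁})` that are bounded
below `(β)_{Q₀,Q₁} ≤ β` form a finite set, which a single `y < β` bounds since `β` is a limit.
A bounding sequence is then built by dependent choice, taking each next term in `Z` beyond
such a bound; bounding sequences can be thinned out because the bounding condition only
gets weaker when `ρ (i + 1)` grows.
-/

open Language

def memRel : mLang.Relations 2 := ()

/-- `∀ z, (z ∈ x₀ ↔ z ∈ x₁) → x₀ = x₁`. -/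
def extensionalityFormula : mLang.Formula (Fin 2) :=
  (BoundedFormula.all
    ((memRel.boundedFormula₂ (Term.var (Sum.inr 0)) (Term.var (Sum.inl 0))).iff
     (memRel.boundedFormula₂ (Term.var (Sum.inr 0)) (Term.var (Sum.inl 1))))).imp
  (Term.bdEqual (Term.var (Sum.inl 0)) (Term.var (Sum.inl 1)))

lemma realize_extensionalityFormula (T A : Set ZFSet) (v : Fin 2 → A) :
    (letI := zStr T A; extensionalityFormula.Realize v) ↔
      ((∀ z : A, (z : ZFSet) ∈ (v 0 : ZFSet) ↔ (z : ZFSet) ∈ (v 1 : ZFSet)) → v 0 = v 1) := by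
  let := zStr T A
  simp only [Formula.Realize, extensionalityFormula, BoundedFormula.realize_imp,
    BoundedFormula.realize_all, BoundedFormula.realize_iff, BoundedFormula.realize_rel₂,
    Term.realize_var, Sum.elim_inr, Sum.elim_inl, Subtype.forall,
    BoundedFormula.realize_bdEqual]
  rfl

lemma mem_HSet_of_mem {κ : Cardinal.{0}} {x y : ZFSet} (hx : x ∈ HSet κ) (hy : y ∈ x) :
    y ∈ HSet κ := by
  obtain ⟨t, ht, hxt, hcard⟩ := hx
  exact ⟨t, ht, ht.mem_trans hy hxt, hcard⟩

lemma ElemIn.eq_of_forall_mem_iff {T S A : Set ZFSet} (hA : ∀ x ∈ A, ∀ y ∈ x, y ∈ A)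
    (he : ElemIn T S A) {x y : ZFSet} (hx : x ∈ S) (hy : y ∈ S)
    (h : ∀ z ∈ S, z ∈ x ↔ z ∈ y) : x = y := by
  obtain ⟨hSA, helem⟩ := he
  have key := helem 2 extensionalityFormula ![⟨x, hx⟩, ⟨y, hy⟩]
  rw [realize_extensionalityFormula, realize_extensionalityFormula] at key
  -- extensionality holds in the transitive `A`, hence in its elementary submodel `S`
  have hext_S := key.1 fun hz => Subtype.ext <| ZFSet.ext fun z =>
    ⟨fun hzx => (hz ⟨z, hA x (hSA hx) z hzx⟩).1 hzx,
      fun hzy => (hz ⟨z, hA y (hSA hy) z hzy⟩).2 hzy⟩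
  exact congrArg Subtype.val (hext_S fun z => h z z.2)

lemma IsIsoZ.eqOn_id_of_ext {T : Set ZFSet} {Q : ZFSet} {f : ZFSet → ZFSet}
    (hf : IsIsoZ T Q Q f)
    (hext : ∀ x ∈ Q, ∀ y ∈ Q, (∀ z ∈ Q, z ∈ x ↔ z ∈ y) → x = y) :
    Set.EqOn f id Q.toSet := by
  intro x
  induction x using ZFSet.mem_wf.induction with
  | _ x IH =>
    intro hx
    refine hext _ (hf.1.mapsTo hx) x hx fun z hz => ⟨fun hzfx => ?_, fun hzx => ?_⟩
    · obtain ⟨y, hy, rfl⟩ := hf.1.surjOn hz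
      have hyx : y ∈ x := (hf.2.1 y hy x hx).2 hzfx
      rwa [IH y hyx hy]
    · simpa [IH z hzx hz] using (hf.2.1 z hz x hx).1 hzx

lemma IsTSymmetricSystem.eqOn_of_isIsoZ {κ : Cardinal.{0}} {T 𝒩 : Set ZFSet}
    (h𝒩 : IsTSymmetricSystem κ T 𝒩) {Q₀ Q₁ : ZFSet} (hQ₀ : Q₀ ∈ 𝒩) (hQ₁ : Q₁ ∈ 𝒩)
    (hh : htr Q₀ = htr Q₁) {f g : ZFSet → ZFSet} (hf : IsIsoZ T Q₀ Q₁ f)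
    (hg : IsIsoZ T Q₀ Q₁ g) : Set.EqOn f g Q₀.toSet := by
  by_cases hne : Q₀ = Q₁
  · subst hne
    have hext : ∀ x ∈ Q₀, ∀ y ∈ Q₀, (∀ z ∈ Q₀, z ∈ x ↔ z ∈ y) → x = y :=
      fun _ hx _ hy => (h𝒩.elem Q₀ hQ₀).eq_of_forall_mem_iff
        (fun _ hx _ hy => mem_HSet_of_mem hx hy) hx hy
    exact (hf.eqOn_id_of_ext hext).trans (hg.eqOn_id_of_ext hext).symm
  · exact h𝒩.iso_unique Q₀ hQ₀ Q₁ hQ₁ hne hh f g hf hg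

/-- `Ψ''x` for an isomorphism `Ψ = f` with domain `Q₀`: the image of the ordinals of `Q₀`
below `x`. -/
def isoImageBelow (Q₀ : ZFSet) (f : ZFSet → ZFSet) (x : Ordinal) : Set Ordinal :=
  {b | ∃ a, a < x ∧ ordToZF a ∈ Q₀ ∧ f (ordToZF a) = ordToZF b}

/-- `(β)_{Q₀,Q₁}`. -/
noncomputable def jointTraceMax (β : Ordinal) (Q₀ Q₁ : ZFSet) : Ordinal :=
  min (clTraceMax Q₀ β) (clTraceMax Q₁ β)

noncomputable def isoImageSup (β : Ordinal) (Q₀ Q₁ : ZFSet) (f : ZFSet → ZFSet)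
    (x : Ordinal) : Ordinal :=
  sSup (isoImageBelow Q₀ f x ∩ Set.Iio (jointTraceMax β Q₀ Q₁))

def IsBoundingStep (T 𝒩 : Set ZFSet) (β x y : Ordinal) : Prop :=
  ∀ Q₀ ∈ 𝒩, ∀ Q₁ ∈ 𝒩, htr Q₀ = htr Q₁ → ∀ f, IsIsoZ T Q₀ Q₁ f →
    isoImageSup β Q₀ Q₁ f x < jointTraceMax β Q₀ Q₁ → isoImageSup β Q₀ Q₁ f x < y

lemma boundingSeq_iff {T 𝒩 : Set ZFSet} {α₀ β : Ordinal} {ρ : ℕ → Ordinal} :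
    BoundingSeq T 𝒩 α₀ β ρ ↔ StrictMono ρ ∧ (∀ i, ρ i < β) ∧ ρ 0 = α₀ + 1 ∧
      ∀ i, IsBoundingStep T 𝒩 β (ρ i) (ρ (i + 1)) :=
  Iff.rfl

lemma IsBoundingStep.mono {T 𝒩 : Set ZFSet} {β x y y' : Ordinal}
    (h : IsBoundingStep T 𝒩 β x y) (hy : y ≤ y') : IsBoundingStep T 𝒩 β x y' :=
  fun Q₀ hQ₀ Q₁ hQ₁ hh f hf hlt => (h Q₀ hQ₀ Q₁ hQ₁ hh f hf hlt).trans_le hy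

lemma clTraceMax_le (Q : ZFSet) (β : Ordinal) : clTraceMax Q β ≤ β :=
  csSup_le' fun _ ho => ho.1.le

lemma jointTraceMax_le (β : Ordinal) (Q₀ Q₁ : ZFSet) : jointTraceMax β Q₀ Q₁ ≤ β :=
  (min_le_left _ _).trans (clTraceMax_le Q₀ β)

lemma isoImageBelow_congr {Q₀ : ZFSet} {f g : ZFSet → ZFSet} (hfg : Set.EqOn f g Q₀.toSet)
    (x : Ordinal) : isoImageBelow Q₀ f x = isoImageBelow Q₀ g x := by
  ext b
  exact exists_congr fun a => and_congr_right fun _ => and_congr_right fun ha => by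
    rw [hfg ha]

lemma IsTSymmetricSystem.finite_isoImageSup {κ : Cardinal.{0}} {T 𝒩 : Set ZFSet}
    (h𝒩 : IsTSymmetricSystem κ T 𝒩) (β x : Ordinal) :
    {s | ∃ Q₀ ∈ 𝒩, ∃ Q₁ ∈ 𝒩, htr Q₀ = htr Q₁ ∧
      ∃ f, IsIsoZ T Q₀ Q₁ f ∧ isoImageSup β Q₀ Q₁ f x = s}.Finite := by
  have hpair : ∀ p ∈ 𝒩 ×ˢ 𝒩, {s | htr p.1 = htr p.2 ∧
      ∃ f, IsIsoZ T p.1 p.2 f ∧ isoImageSup β p.1 p.2 f x = s}.Finite := by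
    rintro ⟨Q₀, Q₁⟩ ⟨hQ₀, hQ₁⟩
    refine Set.Subsingleton.finite ?_
    rintro _ ⟨hh, f, hf, rfl⟩ _ ⟨-, g, hg, rfl⟩
    simp only [isoImageSup, isoImageBelow_congr (h𝒩.eqOn_of_isIsoZ hQ₀ hQ₁ hh hf hg)]
  refine ((h𝒩.finite.prod h𝒩.finite).biUnion hpair).subset ?_
  rintro _ ⟨Q₀, hQ₀, Q₁, hQ₁, hs⟩
  exact Set.mem_biUnion (x := (Q₀, Q₁)) ⟨hQ₀, hQ₁⟩ hs

lemma Order.IsSuccLimit.exists_forall_lt_of_finite {α : Type*}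
    [ConditionallyCompleteLinearOrderBot α] [SuccOrder α] {β : α} (hβ : Order.IsSuccLimit β)
    {S : Set α} (hS : S.Finite) (hSβ : S ⊆ Set.Iio β) : ∃ y < β, ∀ s ∈ S, s < y := by
  have hsup : sSup S < β := by
    rcases S.eq_empty_or_nonempty with rfl | hne
    · simpa using hβ.bot_lt
    · exact (hS.csSup_lt_iff hne).2 hSβ
  refine ⟨Order.succ (sSup S), hβ.succ_lt hsup, fun s hs => ?_⟩
  exact (le_csSup hS.bddAbove hs).trans_lt (Order.lt_succ_of_not_isMax (not_isMax_of_lt hsup))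

lemma IsTSymmetricSystem.exists_isBoundingStep {κ : Cardinal.{0}} {T 𝒩 : Set ZFSet}
    (h𝒩 : IsTSymmetricSystem κ T 𝒩) {β : Ordinal} (hβ : Order.IsSuccLimit β) (x : Ordinal) :
    ∃ y < β, IsBoundingStep T 𝒩 β x y := by
  obtain ⟨y, hyβ, hy⟩ := hβ.exists_forall_lt_of_finite
    ((h𝒩.finite_isoImageSup β x).inter_of_left (Set.Iio β)) Set.inter_subset_right
  refine ⟨y, hyβ, fun Q₀ hQ₀ Q₁ hQ₁ hh f hf hlt => hy _ ⟨?_, ?_⟩⟩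
  · exact ⟨Q₀, hQ₀, Q₁, hQ₁, hh, f, hf, rfl⟩
  · exact hlt.trans_le (jointTraceMax_le β Q₀ Q₁)

lemma exists_seq_of_forall_mem_exists {α : Type*} {Z : Set α} {R : α → α → Prop} {a : α}
    (ha : a ∈ Z) (h : ∀ x ∈ Z, ∃ y ∈ Z, R x y) :
    ∃ ρ : ℕ → α, ρ 0 = a ∧ ∀ n, ρ n ∈ Z ∧ R (ρ n) (ρ (n + 1)) := by
  choose! g hgZ hgR using h
  have hmem : ∀ n, g^[n] a ∈ Z := fun n => Set.MapsTo.iterate hgZ n ha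
  exact ⟨fun n => g^[n] a, rfl, fun n =>
    ⟨hmem n, by simpa only [Function.iterate_succ_apply'] using hgR _ (hmem n)⟩⟩

lemma IsTSymmetricSystem.exists_boundingSeq_forall_mem {κ : Cardinal.{0}} {T 𝒩 : Set ZFSet}
    (h𝒩 : IsTSymmetricSystem κ T 𝒩) {α₀ β : Ordinal} (hβ : Order.IsSuccLimit β)
    {Z : Set Ordinal} (hZβ : Z ⊆ Set.Iio β) (hZ : ∀ γ < β, ∃ ξ ∈ Z, γ < ξ) (hα₀ : α₀ + 1 ∈ Z) :
    ∃ ρ : ℕ → Ordinal, BoundingSeq T 𝒩 α₀ β ρ ∧ ∀ i, ρ i ∈ Z := by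
  have hnext : ∀ x ∈ Z, ∃ ξ ∈ Z, x < ξ ∧ IsBoundingStep T 𝒩 β x ξ := by
    intro x hx
    obtain ⟨y, hyβ, hy⟩ := h𝒩.exists_isBoundingStep hβ x
    obtain ⟨ξ, hξ, hlt⟩ := hZ (max x y) (max_lt (hZβ hx) hyβ)
    exact ⟨ξ, hξ, (le_max_left x y).trans_lt hlt, hy.mono (le_max_right x y |>.trans hlt.le)⟩
  obtain ⟨ρ, hρ0, hρ⟩ := exists_seq_of_forall_mem_exists hα₀ hnext
  exact ⟨ρ, ⟨strictMono_nat_of_lt_succ fun i => (hρ i).2.1, fun i => hZβ (hρ i).1, hρ0,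
    fun i => (hρ i).2.2⟩, fun i => (hρ i).1⟩

lemma BoundingSeq.comp_strictMono {T 𝒩 : Set ZFSet} {α₀ β : Ordinal} {ρ : ℕ → Ordinal}
    (hρ : BoundingSeq T 𝒩 α₀ β ρ) {s : ℕ → ℕ} (hs : StrictMono s) (hs0 : ρ (s 0) = α₀ + 1) :
    BoundingSeq T 𝒩 α₀ β (ρ ∘ s) := by
  obtain ⟨hmono, hlt, -, hstep⟩ := boundingSeq_iff.1 hρ
  exact ⟨hmono.comp hs, fun i => hlt (s i), hs0,
    fun i => (hstep (s i)).mono (hmono.monotone (hs (Nat.lt_succ_self i)))⟩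

theorem stmt17_general (κ : Cardinal.{0}) (T : Set ZFSet) (β : Ordinal)
    (hβ : Order.IsSuccLimit β) (α₀ : Ordinal) (hα₀ : α₀ < β)
    (𝒩 : Set ZFSet) (h𝒩 : IsClosedTSymmetricSystem κ T 𝒩) :
    (∃ ρ : ℕ → Ordinal, BoundingSeq T 𝒩 α₀ β ρ) ∧
    (∀ Z : Set Ordinal, Z ⊆ Set.Iio β → (∀ γ < β, ∃ ξ ∈ Z, γ < ξ) → α₀ + 1 ∈ Z →
      ∃ ρ : ℕ → Ordinal, BoundingSeq T 𝒩 α₀ β ρ ∧ ∀ i, ρ i ∈ Z) ∧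
    (∀ ρ : ℕ → Ordinal, BoundingSeq T 𝒩 α₀ β ρ →
      ∀ s : ℕ → ℕ, StrictMono s → ρ (s 0) = α₀ + 1 →
        BoundingSeq T 𝒩 α₀ β (ρ ∘ s)) := by
  have hrefine := fun Z => h𝒩.1.exists_boundingSeq_forall_mem (α₀ := α₀) hβ (Z := Z)
  refine ⟨?_, hrefine, fun ρ hρ s hs hs0 => hρ.comp_strictMono hs hs0⟩
  obtain ⟨ρ, hρ, -⟩ := hrefine (Set.Iio β) subset_rfl
    (fun γ hγ => ⟨Order.succ γ, hβ.succ_lt hγ, Order.lt_succ γ⟩) (hβ.succ_lt hα₀)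
  exact ⟨ρ, hρ⟩

/-- Bounding sequences exist and can be refined. -/
theorem stmt17 (κ : Cardinal.{0}) (T : Set ZFSet) (β : Ordinal)
    (hβκ : β < κ.ord) (hβ : Order.IsSuccLimit β) (α₀ : Ordinal) (hα₀ : α₀ < β)
    (𝒩 : Set ZFSet) (h𝒩 : IsClosedTSymmetricSystem κ T 𝒩) :
    (∃ ρ : ℕ → Ordinal, BoundingSeq T 𝒩 α₀ β ρ) ∧
    (∀ Z : Set Ordinal, Z ⊆ Set.Iio β → (∀ γ < β, ∃ ξ ∈ Z, γ < ξ) → α₀ + 1 ∈ Z →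
      ∃ ρ : ℕ → Ordinal, BoundingSeq T 𝒩 α₀ β ρ ∧ ∀ i, ρ i ∈ Z) ∧
    (∀ ρ : ℕ → Ordinal, BoundingSeq T 𝒩 α₀ β ρ →
      ∀ s : ℕ → ℕ, StrictMono s → ρ (s 0) = α₀ + 1 →
        BoundingSeq T 𝒩 α₀ β (ρ ∘ s)) :=
  stmt17_general κ T β hβ α₀ hα₀ 𝒩 h𝒩
end
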